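/- Let u, v, z be smooth 2π-periodic-in-x solutions of u_t = v - u u_x, v_t = z - u v_x, z_t = - u z_x. Then for every natural number n, the functional H_n^{(3)} := ∫₀^{2π} z_x (v² - 2 z u)ⁿ dx is conserved in time. -/

import Mathlib

open Real

noncomputable def pdx (f : ℝ → ℝ → ℝ) (x t : ℝ) : ℝ := deriv (fun y => f y t) x

noncomputable def pdt (f : ℝ → ℝ → ℝ) (x t : ℝ) : ℝ := deriv (fun s => f x s) t

/-- The material derivative `D_t = ∂/∂t + u ∂/∂x` associated to the velocity `u`. -/
noncomputable def matDt (u f : ℝ → ℝ → ℝ) : ℝ → ℝ → ℝ :=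
  fun x t => pdt f x t + u x t * pdx f x t
section helpers
open Function
lemma hasDerivAt_pdx_aux {f : ℝ → ℝ → ℝ} (hf : ContDiff ℝ (⊤ : ℕ∞) (uncurry f)) (x t : ℝ) :
    HasDerivAt (fun y => f y t) (fderiv ℝ (uncurry f) (x, t) (1, 0)) x := by
  have h1 : HasFDerivAt (uncurry f) (fderiv ℝ (uncurry f) (x, t)) (x, t) :=
    (hf.differentiable (by simp) (x, t)).hasFDerivAt
  have h2 : HasDerivAt (fun y : ℝ => ((y, t) : ℝ × ℝ)) ((1 : ℝ), (0 : ℝ)) x :=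
    (hasDerivAt_id x).prodMk (hasDerivAt_const x t)
  exact h1.comp_hasDerivAt x h2

lemma hasDerivAt_pdt_aux {f : ℝ → ℝ → ℝ} (hf : ContDiff ℝ (⊤ : ℕ∞) (uncurry f)) (x t : ℝ) :
    HasDerivAt (fun s => f x s) (fderiv ℝ (uncurry f) (x, t) (0, 1)) t := by
  have h1 : HasFDerivAt (uncurry f) (fderiv ℝ (uncurry f) (x, t)) (x, t) :=
    (hf.differentiable (by simp) (x, t)).hasFDerivAt
  have h2 : HasDerivAt (fun s : ℝ => ((x, s) : ℝ × ℝ)) ((0 : ℝ), (1 : ℝ)) t :=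
    (hasDerivAt_const t x).prodMk (hasDerivAt_id t)
  exact h1.comp_hasDerivAt t h2

lemma pdx_eq {f : ℝ → ℝ → ℝ} (hf : ContDiff ℝ (⊤ : ℕ∞) (uncurry f)) (x t : ℝ) :
    pdx f x t = fderiv ℝ (uncurry f) (x, t) (1, 0) := (hasDerivAt_pdx_aux hf x t).deriv

lemma pdt_eq {f : ℝ → ℝ → ℝ} (hf : ContDiff ℝ (⊤ : ℕ∞) (uncurry f)) (x t : ℝ) :
    pdt f x t = fderiv ℝ (uncurry f) (x, t) (0, 1) := (hasDerivAt_pdt_aux hf x t).deriv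

lemma hasDerivAt_pdx {f : ℝ → ℝ → ℝ} (hf : ContDiff ℝ (⊤ : ℕ∞) (uncurry f)) (x t : ℝ) :
    HasDerivAt (fun y => f y t) (pdx f x t) x := by
  rw [pdx_eq hf]; exact hasDerivAt_pdx_aux hf x t

lemma hasDerivAt_pdt {f : ℝ → ℝ → ℝ} (hf : ContDiff ℝ (⊤ : ℕ∞) (uncurry f)) (x t : ℝ) :
    HasDerivAt (fun s => f x s) (pdt f x t) t := by
  rw [pdt_eq hf]; exact hasDerivAt_pdt_aux hf x t

lemma contDiff_pdx {f : ℝ → ℝ → ℝ} (hf : ContDiff ℝ (⊤ : ℕ∞) (uncurry f)) :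
    ContDiff ℝ (⊤ : ℕ∞) (uncurry (pdx f)) := by
  have : uncurry (pdx f) = fun p : ℝ × ℝ => fderiv ℝ (uncurry f) p (1, 0) := by
    ext ⟨x, t⟩; exact pdx_eq hf x t
  rw [this]
  exact (hf.fderiv_right (by simp)).clm_apply contDiff_const

lemma contDiff_pdt {f : ℝ → ℝ → ℝ} (hf : ContDiff ℝ (⊤ : ℕ∞) (uncurry f)) :
    ContDiff ℝ (⊤ : ℕ∞) (uncurry (pdt f)) := by
  have : uncurry (pdt f) = fun p : ℝ × ℝ => fderiv ℝ (uncurry f) p (0, 1) := by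
    ext ⟨x, t⟩; exact pdt_eq hf x t
  rw [this]
  exact (hf.fderiv_right (by simp)).clm_apply contDiff_const

lemma pd_comm {f : ℝ → ℝ → ℝ} (hf : ContDiff ℝ (⊤ : ℕ∞) (uncurry f)) (x t : ℝ) :
    pdt (pdx f) x t = pdx (pdt f) x t := by
  set F := uncurry f
  have hdF : ∀ p, HasFDerivAt F (fderiv ℝ F p) p := fun p =>
    (hf.differentiable (by simp) p).hasFDerivAt
  have h2 : HasFDerivAt (fderiv ℝ F) (fderiv ℝ (fderiv ℝ F) (x, t)) (x, t) :=
    (((hf.fderiv_right (m := (⊤ : ℕ∞)) (by simp)).differentiable (by simp)) (x, t)).hasFDerivAt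
  have hsym := second_derivative_symmetric hdF h2
  have hax : ∀ (vv : ℝ × ℝ), HasFDerivAt (fun p => fderiv ℝ F p vv)
      ((fderiv ℝ (fderiv ℝ F) (x, t)).flip vv) (x, t) := by
    intro vv
    have := h2.clm_apply (hasFDerivAt_const vv (x, t))
    simpa using this
  have e1 : pdt (pdx f) x t = fderiv ℝ (fderiv ℝ F) (x, t) (0, 1) (1, 0) := by
    have hslice : HasDerivAt (fun s : ℝ => ((x, s) : ℝ × ℝ)) ((0 : ℝ), (1 : ℝ)) t :=
      (hasDerivAt_const t x).prodMk (hasDerivAt_id t)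
    have h3 : HasDerivAt (fun s => fderiv ℝ F (x, s) (1, 0))
        (fderiv ℝ (fderiv ℝ F) (x, t) (0, 1) (1, 0)) t := by
      have h := (hax (1, 0)).comp_hasDerivAt t hslice
      simp only [ContinuousLinearMap.flip_apply] at h
      exact h
    have h4 : HasDerivAt (fun s => pdx f x s) (fderiv ℝ (fderiv ℝ F) (x, t) (0, 1) (1, 0)) t :=
      h3.congr_of_eventuallyEq (Filter.Eventually.of_forall fun s => pdx_eq hf x s)
    exact h4.deriv
  have e2 : pdx (pdt f) x t = fderiv ℝ (fderiv ℝ F) (x, t) (1, 0) (0, 1) := by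
    have hslice : HasDerivAt (fun y : ℝ => ((y, t) : ℝ × ℝ)) ((1 : ℝ), (0 : ℝ)) x :=
      (hasDerivAt_id x).prodMk (hasDerivAt_const x t)
    have h3 : HasDerivAt (fun y => fderiv ℝ F (y, t) (0, 1))
        (fderiv ℝ (fderiv ℝ F) (x, t) (1, 0) (0, 1)) x := by
      have h := (hax (0, 1)).comp_hasDerivAt x hslice
      simp only [ContinuousLinearMap.flip_apply] at h
      exact h
    have h4 : HasDerivAt (fun y => pdt f y t) (fderiv ℝ (fderiv ℝ F) (x, t) (1, 0) (0, 1)) x :=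
      h3.congr_of_eventuallyEq (Filter.Eventually.of_forall fun y => pdt_eq hf y t)
    exact h4.deriv
  rw [e1, e2, hsym]

lemma pdx_periodic {f : ℝ → ℝ → ℝ} {T : ℝ} (t : ℝ)
    (hp : Function.Periodic (fun x => f x t) T) :
    Function.Periodic (fun x => pdx f x t) T := by
  intro x
  show deriv (fun y => f y t) (x + T) = deriv (fun y => f y t) x
  rw [← deriv_comp_add_const (fun y => f y t) T x]
  congr 1
  ext y
  exact hp y

end helpers

open Function in
theorem statement7
    (u v z : ℝ → ℝ → ℝ)
    (hu : ContDiff ℝ (⊤ : ℕ∞) (Function.uncurry u))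
    (hv : ContDiff ℝ (⊤ : ℕ∞) (Function.uncurry v))
    (hz : ContDiff ℝ (⊤ : ℕ∞) (Function.uncurry z))
    (hup : ∀ t, Function.Periodic (fun x => u x t) (2 * Real.pi))
    (hvp : ∀ t, Function.Periodic (fun x => v x t) (2 * Real.pi))
    (hzp : ∀ t, Function.Periodic (fun x => z x t) (2 * Real.pi))
    (heq1 : ∀ x t, pdt u x t = v x t - u x t * pdx u x t)
    (heq2 : ∀ x t, pdt v x t = z x t - u x t * pdx v x t)
    (heq3 : ∀ x t, pdt z x t = - u x t * pdx z x t) :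
    ∀ n : ℕ, ∀ t, deriv (fun s => ∫ x in (0:ℝ)..(2 * Real.pi),
      (pdx z x s * ((v x s) ^ 2 - 2 * z x s * u x s) ^ n)) t = 0 := by
  intro n t₀
  set w : ℝ → ℝ → ℝ := fun x t => v x t ^ 2 - 2 * z x t * u x t with hw_def
  have hw : ContDiff ℝ (⊤ : ℕ∞) (uncurry w) := by
    exact (hv.pow 2).sub ((contDiff_const.mul hz).mul hu)
  have hzxc : ContDiff ℝ (⊤ : ℕ∞) (uncurry (pdx z)) := contDiff_pdx hz
  set G : ℝ → ℝ → ℝ := fun x t => -(u x t * pdx z x t * w x t ^ n) with hG_def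
  have hG : ContDiff ℝ (⊤ : ℕ∞) (uncurry G) := by
    exact ((hu.mul hzxc).mul (hw.pow n)).neg
  -- pointwise: t-derivative of the integrand equals pdx G
  have key_t : ∀ x s, HasDerivAt (fun s' => pdx z x s' * w x s' ^ n) (pdx G x s) s := by
    intro x s
    have hut := hasDerivAt_pdt hu x s
    have hvt := hasDerivAt_pdt hv x s
    have hzt := hasDerivAt_pdt hz x s
    have hzxt := hasDerivAt_pdt hzxc x s
    have hwt : HasDerivAt (fun s' => w x s')
        ((2 : ℕ) * v x s ^ (2 - 1) * pdt v x s -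
          (2 * pdt z x s * u x s + 2 * z x s * pdt u x s)) s := by
      exact (hvt.pow 2).sub (((hzt.const_mul 2)).mul hut)
    have A := hzxt.mul (hwt.pow n)
    -- x-derivative blocks
    have hux := hasDerivAt_pdx hu x s
    have hvx := hasDerivAt_pdx hv x s
    have hzx' := hasDerivAt_pdx hz x s
    have hzxx := hasDerivAt_pdx hzxc x s
    have hwx : HasDerivAt (fun y => w y s)
        ((2 : ℕ) * v x s ^ (2 - 1) * pdx v x s -
          (2 * pdx z x s * u x s + 2 * z x s * pdx u x s)) x := by
      exact (hvx.pow 2).sub (((hzx'.const_mul 2)).mul hux)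
    have B := (((hux.mul hzxx).mul (hwx.pow n))).neg
    have hpdxG : pdx G x s =
        -((pdx u x s * pdx z x s + u x s * pdx (pdx z) x s) * w x s ^ n +
          u x s * pdx z x s * (↑n * w x s ^ (n - 1) *
            ((2 : ℕ) * v x s ^ (2 - 1) * pdx v x s -
              (2 * pdx z x s * u x s + 2 * z x s * pdx u x s)))) := B.deriv
    have hC : pdt (pdx z) x s = -(pdx u x s * pdx z x s + u x s * pdx (pdx z) x s) := by
      rw [pd_comm hz]
      have h' : HasDerivAt (fun y => - u y s * pdx z y s)
          (-(pdx u x s * pdx z x s + u x s * pdx (pdx z) x s)) x := by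
        have : HasDerivAt (fun y => - u y s * pdx z y s)
            (-pdx u x s * pdx z x s + -u x s * pdx (pdx z) x s) x := (hux.neg.mul hzxx)
        convert this using 1
        ring
      have h'' : HasDerivAt (fun y => pdt z y s)
          (-(pdx u x s * pdx z x s + u x s * pdx (pdx z) x s)) x :=
        h'.congr_of_eventuallyEq (Filter.Eventually.of_forall fun y => heq3 y s)
      exact h''.deriv
    have hEq : pdt (pdx z) x s * w x s ^ n +
        pdx z x s * (↑n * w x s ^ (n - 1) *
          ((2 : ℕ) * v x s ^ (2 - 1) * pdt v x s -
            (2 * pdt z x s * u x s + 2 * z x s * pdt u x s))) = pdx G x s := by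
      rw [hpdxG, hC, heq1, heq2, heq3]
      ring
    rw [← hEq]
    exact A
  -- continuity facts
  have hFcont : Continuous (fun p : ℝ × ℝ => pdx z p.1 p.2 * w p.1 p.2 ^ n) :=
    hzxc.continuous.mul (hw.continuous.pow n)
  have hGxc : ContDiff ℝ (⊤ : ℕ∞) (uncurry (pdx G)) := contDiff_pdx hG
  -- bound on a compact set
  obtain ⟨C, hC⟩ := ((isCompact_uIcc (a := (0:ℝ)) (b := 2 * Real.pi)).prod
    (isCompact_closedBall t₀ 1)).exists_bound_of_continuousOn hGxc.continuous.continuousOn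
  have main := intervalIntegral.hasDerivAt_integral_of_dominated_loc_of_deriv_le
    (F := fun s x => pdx z x s * w x s ^ n) (F' := fun s x => pdx G x s)
    (x₀ := t₀) (a := 0) (b := 2 * Real.pi) (bound := fun _ => C) (μ := MeasureTheory.volume)
    (Metric.ball_mem_nhds t₀ one_pos)
    (Filter.Eventually.of_forall fun s =>
      ((hFcont.comp (continuous_id.prodMk continuous_const)).aestronglyMeasurable))
    ((hFcont.comp (continuous_id.prodMk continuous_const)).intervalIntegrable 0 (2 * Real.pi))
    ((hGxc.continuous.comp (continuous_id.prodMk continuous_const)).aestronglyMeasurable)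
    (Filter.Eventually.of_forall fun x hx s hs =>
      hC (x, s) ⟨Set.uIoc_subset_uIcc hx, Metric.ball_subset_closedBall hs⟩)
    (intervalIntegrable_const)
    (Filter.Eventually.of_forall fun x _ s _ => key_t x s)
  rw [main.2.deriv]
  -- now evaluate the integral of an x-derivative
  have hsub : ∫ x in (0:ℝ)..(2 * Real.pi), pdx G x t₀ = G (2 * Real.pi) t₀ - G 0 t₀ :=
    intervalIntegral.integral_eq_sub_of_hasDerivAt
      (fun x _ => hasDerivAt_pdx hG x t₀)
      ((hGxc.continuous.comp (continuous_id.prodMk continuous_const)).intervalIntegrable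
        0 (2 * Real.pi))
  have hper : G (2 * Real.pi) t₀ = G 0 t₀ := by
    have h1 := hup t₀ 0
    have h2 := hvp t₀ 0
    have h3 := hzp t₀ 0
    have h4 := pdx_periodic t₀ (hzp t₀) 0
    simp only [zero_add] at h1 h2 h3 h4
    simp only [hG_def, hw_def, h1, h2, h3, h4]
  rw [hsub, hper, sub_self]
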